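/- Let K be a field of characteristic zero, f ∈ lie_m, g ∈ lie_n, σ a permutation of {1,…,m}, τ a permutation of {1,…,n}, and 1 ≤ i ≤ m. Then f^σ ∘_{σ⁻¹(i)} g^τ = (f ∘_i g)^{σ∘_iτ} in lie_{m+n−1}. -/

import Mathlib

open FreeLieAlgebra

variable (K : Type) [Field K] [CharZero K]

/-- The free Lie algebra over `K` on `N` generators `x_1, …, x_N`
(indexed here 0-based by `Fin N`). -/
abbrev lieF (N : ℕ) : Type := FreeLieAlgebra K (Fin N)

/-- The `(k+1)`-st generator of `lieF K N` (0-based index `k`), junk value `0` out of range. -/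
noncomputable def xg (N k : ℕ) : lieF K N :=
  if h : k < N then FreeLieAlgebra.of K (⟨k, h⟩ : Fin N) else 0

/-- The Lie algebra homomorphism `Φ_i : lie_m → lie_{m+n-1}` sending (0-based) `x_j ↦ x_j`
for `j < i`, `x_i ↦ x_i + x_{i+1} + ⋯ + x_{i+n-1}`, and `x_j ↦ x_{j+n-1}` for `j > i`. -/
noncomputable def PhiL (m n i : ℕ) : lieF K m →ₗ⁅K⁆ lieF K (m + n - 1) :=
  FreeLieAlgebra.lift K fun j : Fin m =>
    if (j : ℕ) < i then xg K (m + n - 1) (j : ℕ)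
    else if (j : ℕ) = i then ∑ t : Fin n, xg K (m + n - 1) (i + (t : ℕ))
    else xg K (m + n - 1) ((j : ℕ) + n - 1)

/-- The Lie algebra homomorphism `Ψ_i : lie_n → lie_{m+n-1}` sending (0-based)
`x_j ↦ x_{i+j}`. -/
noncomputable def PsiL (m n i : ℕ) : lieF K n →ₗ⁅K⁆ lieF K (m + n - 1) :=
  FreeLieAlgebra.lift K fun j : Fin n => xg K (m + n - 1) (i + (j : ℕ))

/-- The partial composition `f ∘_i g := Φ_i(f) + Ψ_i(g)` of free Lie algebra elements
(the pivot `i` is 0-based). -/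
noncomputable def compL {m n : ℕ} (f : lieF K m) (i : ℕ) (g : lieF K n) :
    lieF K (m + n - 1) :=
  PhiL K m n i f + PsiL K m n i g

/-- The canonical identification `lie_N ≅ lie_{N'}` for `N = N'`. -/
noncomputable def recastL {N N' : ℕ} (hNN : N = N') : lieF K N →ₗ⁅K⁆ lieF K N' :=
  FreeLieAlgebra.lift K fun j => FreeLieAlgebra.of K (Fin.cast hNN j)

/-- The Lie algebra automorphism `P_σ` of `lie_N` with `P_σ(x_j) = x_{σ⁻¹(j)}`;
`f^σ := P_σ(f)`. -/
noncomputable def permL {N : ℕ} (σ : Equiv.Perm (Fin N)) : lieF K N →ₗ⁅K⁆ lieF K N :=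
  FreeLieAlgebra.lift K fun j => FreeLieAlgebra.of K (σ⁻¹ j)

/-- The value of a permutation of `Fin N` at a natural number (junk value `k` out of
range). -/
def permVal {N : ℕ} (σ : Equiv.Perm (Fin N)) (k : ℕ) : ℕ :=
  if h : k < N then ((σ ⟨k, h⟩ : Fin N) : ℕ) else k

/-!
Both sides are sums of images of `f` and `g` under Lie algebra homomorphisms, so it suffices to
prove `Φ_p ∘ P_σ = P_ρ ∘ Φ_i` and `Ψ_p ∘ P_τ = P_ρ ∘ Ψ_i` with `p = σ⁻¹(i)`, and these can be
checked on generators. There they reduce to two properties of the inserted permutation `ρ`: it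
sends the block `p, …, p+n-1` to `i + τ(0), …, i + τ(n-1)`, and outside that block it is `σ`
read through the index shifts that `Φ_p` and `Φ_i` perform.
-/

section
omit [CharZero K]

lemma xg_val {N : ℕ} (a : Fin N) : xg K N a = FreeLieAlgebra.of K a :=
  dif_pos a.isLt

lemma xg_of_le {N k : ℕ} (h : N ≤ k) : xg K N k = 0 :=
  dif_neg h.not_gt

lemma lieF_hom_ext {N : ℕ} {L : Type*} [LieRing L] [LieAlgebra K L]
    {φ ψ : lieF K N →ₗ⁅K⁆ L} (h : ∀ j < N, φ (xg K N j) = ψ (xg K N j)) : φ = ψ :=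
  FreeLieAlgebra.hom_ext fun a => by simpa only [xg_val] using h a a.isLt

lemma permVal_val {N : ℕ} (σ : Equiv.Perm (Fin N)) (a : Fin N) : permVal σ a = σ a :=
  dif_pos a.isLt

lemma permVal_of_le {N k : ℕ} (σ : Equiv.Perm (Fin N)) (h : N ≤ k) : permVal σ k = k :=
  dif_neg h.not_gt

lemma permVal_lt {N k : ℕ} (σ : Equiv.Perm (Fin N)) (h : k < N) : permVal σ k < N := by
  obtain ⟨a, rfl⟩ : ∃ a : Fin N, (a : ℕ) = k := ⟨⟨k, h⟩, rfl⟩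
  rw [permVal_val]
  exact (σ a).isLt

@[simp]
lemma permVal_symm_permVal {N : ℕ} (σ : Equiv.Perm (Fin N)) (k : ℕ) :
    permVal σ.symm (permVal σ k) = k := by
  by_cases h : k < N
  · obtain ⟨a, rfl⟩ : ∃ a : Fin N, (a : ℕ) = k := ⟨⟨k, h⟩, rfl⟩
    rw [permVal_val, permVal_val, Equiv.symm_apply_apply]
  · rw [permVal_of_le σ (not_lt.1 h), permVal_of_le σ.symm (not_lt.1 h)]

@[simp]
lemma permVal_permVal_symm {N : ℕ} (σ : Equiv.Perm (Fin N)) (k : ℕ) :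
    permVal σ (permVal σ.symm k) = k :=
  permVal_symm_permVal σ.symm k

lemma permL_xg {N : ℕ} (σ : Equiv.Perm (Fin N)) (k : ℕ) :
    permL K σ (xg K N k) = xg K N (permVal σ.symm k) := by
  by_cases h : k < N
  · obtain ⟨a, rfl⟩ : ∃ a : Fin N, (a : ℕ) = k := ⟨⟨k, h⟩, rfl⟩
    rw [xg_val, permVal_val, xg_val]
    exact FreeLieAlgebra.lift_of_apply _ a
  · rw [permVal_of_le σ.symm (not_lt.1 h), xg_of_le K (not_lt.1 h), map_zero]

lemma permL_xg_permVal {N : ℕ} (σ : Equiv.Perm (Fin N)) (k : ℕ) :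
    permL K σ (xg K N (permVal σ k)) = xg K N k := by
  rw [permL_xg, permVal_symm_permVal]

def expandIdx (i n j : ℕ) : ℕ :=
  if j < i then j else j + n - 1

lemma PhiL_xg_of_ne {m n i j : ℕ} (hj : j < m) (hji : j ≠ i) :
    PhiL K m n i (xg K m j) = xg K (m + n - 1) (expandIdx i n j) := by
  obtain ⟨a, rfl⟩ : ∃ a : Fin m, (a : ℕ) = j := ⟨⟨j, hj⟩, rfl⟩
  rw [xg_val, PhiL, FreeLieAlgebra.lift_of_apply, expandIdx]
  split_ifs <;> rfl

lemma PhiL_xg_self {m n i : ℕ} (hi : i < m) :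
    PhiL K m n i (xg K m i) = ∑ t : Fin n, xg K (m + n - 1) (i + t) := by
  obtain ⟨a, rfl⟩ : ∃ a : Fin m, (a : ℕ) = i := ⟨⟨i, hi⟩, rfl⟩
  rw [xg_val, PhiL, FreeLieAlgebra.lift_of_apply, if_neg (lt_irrefl _), if_pos rfl]

lemma PsiL_xg {m n i j : ℕ} (hj : j < n) :
    PsiL K m n i (xg K n j) = xg K (m + n - 1) (i + j) := by
  obtain ⟨a, rfl⟩ : ∃ a : Fin n, (a : ℕ) = j := ⟨⟨j, hj⟩, rfl⟩
  rw [xg_val, PsiL, FreeLieAlgebra.lift_of_apply]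

/-- `ρ = σ ∘_i τ` in 0-based indices: with `p = σ⁻¹(i)`, the cases `k < p`, `p ≤ k < p + n` and
`p + n ≤ k` of the paper's definition. -/
def IsInsertedPerm {m n : ℕ} (σ : Equiv.Perm (Fin m)) (τ : Equiv.Perm (Fin n)) (i : ℕ)
    (ρ : Equiv.Perm (Fin (m + n - 1))) : Prop :=
  ∀ k : ℕ, k < m + n - 1 →
    permVal ρ k =
      if k < permVal σ.symm i then
        if permVal σ k < i then permVal σ k else permVal σ k + n - 1
      else if k < permVal σ.symm i + n then
        permVal τ (k - permVal σ.symm i) + i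
      else if permVal σ (k + 1 - n) < i then permVal σ (k + 1 - n)
      else permVal σ (k + 1 - n) + n - 1

namespace IsInsertedPerm

variable {m n i : ℕ} {σ : Equiv.Perm (Fin m)} {τ : Equiv.Perm (Fin n)}
  {ρ : Equiv.Perm (Fin (m + n - 1))}

lemma permVal_add (hρ : IsInsertedPerm σ τ i ρ) (hi : i < m) {s : ℕ} (hs : s < n) :
    permVal ρ (permVal σ.symm i + s) = i + permVal τ s := by
  have hp := permVal_lt σ.symm hi
  rw [hρ _ (by omega), if_neg (by omega), if_pos (by omega), Nat.add_sub_cancel_left,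
    Nat.add_comm]

lemma permVal_expandIdx (hρ : IsInsertedPerm σ τ i ρ) (hi : i < m) {j : ℕ} (hj : j < m)
    (hjp : j ≠ permVal σ.symm i) :
    permVal ρ (expandIdx (permVal σ.symm i) n j) = expandIdx i n (permVal σ j) := by
  have hp := permVal_lt σ.symm hi
  unfold expandIdx
  rcases hjp.lt_or_gt with h | h
  · rw [if_pos h, hρ j (by omega), if_pos h]
  · rw [if_neg h.not_gt, hρ _ (by omega), if_neg (by omega), if_neg (by omega),
      show j + n - 1 + 1 - n = j by omega]

lemma PsiL_comp_permL (hρ : IsInsertedPerm σ τ i ρ) (hi : i < m) :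
    (PsiL K m n (permVal σ.symm i)).comp (permL K τ) = (permL K ρ).comp (PsiL K m n i) :=
  lieF_hom_ext K fun j hj => by
    have hj' := permVal_lt τ.symm hj
    rw [LieHom.comp_apply, LieHom.comp_apply, permL_xg, PsiL_xg K hj', PsiL_xg K hj,
      ← permVal_permVal_symm τ j, ← hρ.permVal_add hi hj', permL_xg_permVal,
      permVal_permVal_symm]

lemma PhiL_comp_permL (hρ : IsInsertedPerm σ τ i ρ) (hi : i < m) :
    (PhiL K m n (permVal σ.symm i)).comp (permL K σ) = (permL K ρ).comp (PhiL K m n i) :=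
  lieF_hom_ext K fun j hj => by
    rw [LieHom.comp_apply, LieHom.comp_apply, permL_xg]
    obtain rfl | hji := eq_or_ne j i
    · rw [PhiL_xg_self K (permVal_lt σ.symm hi), PhiL_xg_self K hi, map_sum]
      calc ∑ t : Fin n, xg K (m + n - 1) (permVal σ.symm j + t)
          = ∑ t : Fin n, permL K ρ (xg K (m + n - 1) (permVal ρ (permVal σ.symm j + t))) := by
            simp only [permL_xg_permVal]
        _ = ∑ t : Fin n, permL K ρ (xg K (m + n - 1) (j + τ t)) := by
            simp only [hρ.permVal_add hi (Fin.isLt _), permVal_val]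
        _ = ∑ t : Fin n, permL K ρ (xg K (m + n - 1) (j + t)) :=
            Equiv.sum_comp τ fun t => permL K ρ (xg K (m + n - 1) (j + t))
    · have hne : permVal σ.symm j ≠ permVal σ.symm i := fun h =>
        hji (by simpa only [permVal_permVal_symm] using congrArg (permVal σ) h)
      rw [PhiL_xg_of_ne K (permVal_lt σ.symm hj) hne, PhiL_xg_of_ne K hj hji,
        ← permL_xg_permVal K ρ, hρ.permVal_expandIdx hi (permVal_lt σ.symm hj) hne,
        permVal_permVal_symm]

end IsInsertedPerm

end

theorem lie_comp_equivariant (m n : ℕ)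
    (f : lieF K m) (g : lieF K n)
    (σ : Equiv.Perm (Fin m)) (τ : Equiv.Perm (Fin n)) (i : ℕ) (hi : i < m)
    (ρ : Equiv.Perm (Fin (m + n - 1)))
    (hρ : ∀ k : ℕ, k < m + n - 1 →
      permVal ρ k =
        if k < permVal σ.symm i then
          if permVal σ k < i then permVal σ k else permVal σ k + n - 1
        else if k < permVal σ.symm i + n then
          permVal τ (k - permVal σ.symm i) + i
        else if permVal σ (k + 1 - n) < i then permVal σ (k + 1 - n)
        else permVal σ (k + 1 - n) + n - 1) :
    compL K (permL K σ f) (permVal σ.symm i) (permL K τ g) =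
      permL K ρ (compL K f i g) := by
  have hρ' : IsInsertedPerm σ τ i ρ := hρ
  rw [compL, compL, map_add]
  exact congrArg₂ (· + ·) (LieHom.congr_fun (hρ'.PhiL_comp_permL K hi) f)
    (LieHom.congr_fun (hρ'.PsiL_comp_permL K hi) g)
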